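/- arXiv:1711.07591 — 5 statements merged into one kernel-verified Lean document; each statement's English description precedes it below -/
import Mathlib

section
/- (Yordanov–Zhang pointwise bound) For n ≥ 2 there exists a constant C = C(n) > 0 such that φ₁(x) ≤ C (1+|x|)^{−(n−1)/2} e^{|x|} for all x ∈ ℝⁿ. -/
open MeasureTheory Real Set

noncomputable section

/-- The Laplacian, as the sum of pure second derivatives in the coordinate directions. -/
def lap {n : ℕ} (u : EuclideanSpace ℝ (Fin n) → ℝ) (x : EuclideanSpace ℝ (Fin n)) : ℝ :=
  ∑ i : Fin n, iteratedDeriv 2 (fun s : ℝ => u (x + s • EuclideanSpace.single i (1 : ℝ))) 0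

/-- The Yordanov–Zhang function `φ₁`:
`φ₁(x) = ∫_{S^{n-1}} e^{x·ω} dS_ω` for `n ≥ 2`, and `φ₁(x) = e^x + e^{-x}` for `n = 1`. -/
def phi1 (n : ℕ) (x : EuclideanSpace ℝ (Fin n)) : ℝ :=
  if n = 1 then Real.exp (∑ i, x i) + Real.exp (-∑ i, x i)
  else ∫ ω : Metric.sphere (0 : EuclideanSpace ℝ (Fin n)) 1,
      Real.exp ((inner ℝ x (ω : EuclideanSpace ℝ (Fin n)) : ℝ))
    ∂((volume : Measure (EuclideanSpace ℝ (Fin n))).toSphere)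

/-- The Yordanov–Zhang test function `ψ(x,t) = e^{-t} φ₁(x)`. -/
def psi (n : ℕ) (x : EuclideanSpace ℝ (Fin n)) (t : ℝ) : ℝ :=
  Real.exp (-t) * phi1 n x

/-! Write `x = r • e` with `‖e‖ = 1`. On the unit sphere `⟪x, ω⟫ = r - (r / 2) ‖ω - e‖²`, and
since `‖ω - e‖ ≤ 2` this is at most `2 + r - ρ ‖ω - e‖²` with `ρ = (1 + r) / 2`, which stays away
from `0`. The cone over the cap `{‖ω - e‖ < s}` lies in a box of width `2 s` in the `n - 1`
directions orthogonal to `e`, so the cap has measure `O(s^(n-1))`. Bounding `exp (-ρ ‖ω - e‖²)` by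
`∑ₖ e^(-k)` times the indicators of the caps `{ρ ‖ω - e‖² < k + 1}` then gives
`∫ exp (-ρ ‖ω - e‖²) dσ = O(ρ^(-(n-1)/2))`. -/

open Metric Module
open scoped ENNReal Pointwise RealInnerProductSpace

lemma summable_add_one_rpow_mul_exp_neg (p : ℝ) :
    Summable fun k : ℕ => ((k : ℝ) + 1) ^ p * exp (-k) := by
  set m := ⌈p⌉₊
  have hm : Summable fun k : ℕ => exp 1 * (((k + 1 : ℕ) : ℝ) ^ m * exp (-1 * (k + 1 : ℕ))) :=
    ((summable_nat_add_iff 1).mpr (summable_pow_mul_exp_neg_nat_mul m one_pos)).mul_left _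
  refine hm.of_nonneg_of_le (fun k => by positivity) fun k => ?_
  have hexp : exp 1 * exp (-1 * (k + 1 : ℕ)) = exp (-k) := by
    rw [← exp_add]; push_cast; ring_nf
  calc ((k : ℝ) + 1) ^ p * exp (-k) ≤ ((k : ℝ) + 1) ^ (m : ℝ) * exp (-k) := by
        gcongr
        · linarith [k.cast_nonneg (α := ℝ)]
        · exact Nat.le_ceil p
    _ = _ := by rw [rpow_natCast, ← hexp]; push_cast; ring

lemma ofReal_exp_neg_le_tsum_indicator {α : Type*} {f : α → ℝ} (hf : ∀ a, 0 ≤ f a) {ρ : ℝ}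
    (hρ : 0 < ρ) (a : α) :
    ENNReal.ofReal (exp (-(ρ * f a))) ≤
      ∑' k : ℕ, {a | f a < (k + 1) / ρ}.indicator (fun _ => ENNReal.ofReal (exp (-k))) a := by
  set k := ⌊ρ * f a⌋₊
  have hk : a ∈ {a | f a < (k + 1) / ρ} := by
    rw [mem_ofPred_eq, lt_div_iff₀ hρ, mul_comm]
    exact Nat.lt_floor_add_one _
  refine le_trans ?_ (ENNReal.le_tsum k)
  rw [indicator_of_mem hk]
  exact ENNReal.ofReal_le_ofReal <| exp_le_exp.mpr <| neg_le_neg <|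
    Nat.floor_le (mul_nonneg hρ.le (hf a))

lemma lintegral_exp_neg_mul_le {α : Type*} [MeasurableSpace α] {μ : Measure α} {f : α → ℝ}
    (hf : Measurable f) (hf0 : ∀ a, 0 ≤ f a) {K p : ℝ} (hK : 0 ≤ K)
    (htail : ∀ δ > 0, μ {a | f a < δ} ≤ ENNReal.ofReal (K * δ ^ p)) {ρ : ℝ} (hρ : 0 < ρ) :
    ∫⁻ a, ENNReal.ofReal (exp (-(ρ * f a))) ∂μ ≤
      ENNReal.ofReal (K * (∑' k : ℕ, ((k : ℝ) + 1) ^ p * exp (-k)) * ρ ^ (-p)) := by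
  have hmeas (k : ℕ) : MeasurableSet {a | f a < (k + 1) / ρ} := hf measurableSet_Iio
  have hterm (k : ℕ) : ENNReal.ofReal (exp (-k)) * μ {a | f a < (k + 1) / ρ} ≤
      ENNReal.ofReal (K * ρ ^ (-p) * (((k : ℝ) + 1) ^ p * exp (-k))) := by
    calc _ ≤ ENNReal.ofReal (exp (-k)) * ENNReal.ofReal (K * ((k + 1) / ρ) ^ p) := by
          gcongr; exact htail _ (by positivity)
      _ = _ := by
          rw [← ENNReal.ofReal_mul (exp_nonneg _), div_rpow (by positivity) hρ.le,
            rpow_neg hρ.le]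
          ring_nf
  calc ∫⁻ a, ENNReal.ofReal (exp (-(ρ * f a))) ∂μ
      ≤ ∫⁻ a, ∑' k : ℕ, {a | f a < (k + 1) / ρ}.indicator
          (fun _ => ENNReal.ofReal (exp (-k))) a ∂μ :=
        lintegral_mono (ofReal_exp_neg_le_tsum_indicator hf0 hρ)
    _ = ∑' k : ℕ, ENNReal.ofReal (exp (-k)) * μ {a | f a < (k + 1) / ρ} := by
        rw [lintegral_tsum fun k => (measurable_const.indicator (hmeas k)).aemeasurable]
        simp only [lintegral_indicator_const (hmeas _)]
    _ ≤ ∑' k : ℕ, ENNReal.ofReal (K * ρ ^ (-p) * (((k : ℝ) + 1) ^ p * exp (-k))) :=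
        ENNReal.tsum_le_tsum hterm
    _ = _ := by
        rw [← ENNReal.ofReal_tsum_of_nonneg (fun k => by positivity)
          ((summable_add_one_rpow_mul_exp_neg p).mul_left _), tsum_mul_left]
        ring_nf

section InnerProductSpace

variable {E : Type*} [NormedAddCommGroup E] [InnerProductSpace ℝ E]

lemma exists_norm_eq_one_smul_eq [Nontrivial E] (x : E) : ∃ e : E, ‖e‖ = 1 ∧ ‖x‖ • e = x := by
  rcases eq_or_ne x 0 with rfl | hx
  · obtain ⟨e, he⟩ := exists_norm_eq E zero_le_one
    exact ⟨e, he, by simp⟩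
  · exact ⟨‖x‖⁻¹ • x, norm_smul_inv_norm hx,
      by rw [smul_smul, mul_inv_cancel₀ (norm_ne_zero_iff.mpr hx), one_smul]⟩

lemma inner_smul_eq_sub_norm_sub_sq {e ω : E} (he : ‖e‖ = 1) (hω : ‖ω‖ = 1) (r : ℝ) :
    ⟪r • e, ω⟫ = r - r / 2 * ‖ω - e‖ ^ 2 := by
  rw [real_inner_smul_left, norm_sub_sq_real, he, hω, real_inner_comm]
  ring

lemma OrthonormalBasis.Ioo_smul_sphere_cap_subset {ι : Type*} [Fintype ι] [DecidableEq ι]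
    (b : OrthonormalBasis ι ℝ E) (i₀ : ι) (s : ℝ) :
    Ioo (0 : ℝ) 1 • ((↑) '' {ω : sphere (0 : E) 1 | ‖(ω : E) - b i₀‖ < s}) ⊆
      {v : E | ∀ i, |b.repr v i| ≤ Function.update (fun _ => s) i₀ 1 i} := by
  rintro _ ⟨t, ⟨ht0, ht1⟩, _, ⟨ω, hω, rfl⟩, rfl⟩ i
  have hω1 : ‖(ω : E)‖ = 1 := norm_eq_of_mem_sphere ω
  rw [b.repr_apply_apply, real_inner_smul_right, abs_mul, abs_of_pos ht0]
  refine le_trans (mul_le_of_le_one_left (abs_nonneg _) ht1.le) ?_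
  rcases eq_or_ne i i₀ with rfl | hi
  · simpa [hω1] using abs_real_inner_le_norm (b i) ω
  · have horth : ⟪b i, b i₀⟫ = 0 := b.orthonormal.2 hi
    calc |⟪b i, (ω : E)⟫| = |⟪b i, (ω : E) - b i₀⟫| := by
          rw [inner_sub_right, horth, sub_zero]
      _ ≤ ‖(ω : E) - b i₀‖ := by simpa using abs_real_inner_le_norm (b i) ((ω : E) - b i₀)
      _ ≤ _ := by rw [Function.update_of_ne hi]; exact hω.le

variable [FiniteDimensional ℝ E]

lemma exists_orthonormalBasis_apply_eq {e : E} (he : ‖e‖ = 1) :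
    ∃ (i₀ : Fin (finrank ℝ E)) (b : OrthonormalBasis (Fin (finrank ℝ E)) ℝ E), b i₀ = e := by
  have : Nontrivial E := ⟨⟨e, 0, norm_ne_zero_iff.mp (by simp [he])⟩⟩
  let i₀ : Fin (finrank ℝ E) := ⟨0, finrank_pos⟩
  have hv : Orthonormal ℝ (({i₀} : Set _).domRestrict fun _ => e) :=
    ⟨fun _ => he, Subsingleton.pairwise⟩
  obtain ⟨b, hb⟩ := hv.exists_orthonormalBasis_extension_of_card_eq (Fintype.card_fin _).symm
  exact ⟨i₀, b, hb i₀ rfl⟩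

variable [MeasurableSpace E] [BorelSpace E]

lemma OrthonormalBasis.volume_setOf_abs_repr_le {ι : Type*} [Fintype ι] (b : OrthonormalBasis ι ℝ E)
    (a : ι → ℝ) :
    volume {v : E | ∀ i, |b.repr v i| ≤ a i} = ∏ i, ENNReal.ofReal (2 * a i) := by
  have hbox : {v : E | ∀ i, |b.repr v i| ≤ a i} =
      b.repr ⁻¹' (WithLp.ofLp ⁻¹' univ.pi fun i => Icc (-a i) (a i)) := by
    ext v; simp only [mem_ofPred_eq, mem_preimage, mem_univ_pi, mem_Icc, abs_le]
  have hmeas : MeasurableSet (univ.pi fun i => Icc (-a i) (a i)) :=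
    .univ_pi fun _ => measurableSet_Icc
  rw [hbox, b.measurePreserving_repr.measure_preimage
      ((PiLp.volume_preserving_ofLp ι).measurable hmeas).nullMeasurableSet,
    (PiLp.volume_preserving_ofLp ι).measure_preimage hmeas.nullMeasurableSet, volume_pi_pi]
  simp only [Real.volume_Icc]
  ring_nf

lemma toSphere_norm_sub_lt_le {e : E} (he : ‖e‖ = 1) {s : ℝ} (hs : 0 ≤ s) :
    (volume : Measure E).toSphere {ω | ‖(ω : E) - e‖ < s} ≤
      ENNReal.ofReal (finrank ℝ E * 2 ^ finrank ℝ E * s ^ (finrank ℝ E - 1)) := by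
  classical
  obtain ⟨i₀, b, rfl⟩ := exists_orthonormalBasis_apply_eq he
  have hd : 1 ≤ finrank ℝ E := Fin.pos i₀
  have hmeas : MeasurableSet {ω : sphere (0 : E) 1 | ‖(ω : E) - b i₀‖ < s} :=
    (isOpen_lt (by fun_prop) continuous_const).measurableSet
  calc (volume : Measure E).toSphere {ω | ‖(ω : E) - b i₀‖ < s}
      ≤ finrank ℝ E *
          volume {v : E | ∀ i, |b.repr v i| ≤ Function.update (fun _ => s) i₀ 1 i} := by
        rw [Measure.toSphere_apply' _ hmeas]
        gcongr
        exact b.Ioo_smul_sphere_cap_subset i₀ s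
    _ = _ := by
        have hpow : (2 : ℝ) ^ finrank ℝ E = 2 * 2 ^ (finrank ℝ E - 1) := by
          rw [← pow_succ', Nat.sub_add_cancel hd]
        rw [b.volume_setOf_abs_repr_le, Fintype.prod_eq_mul_prod_compl i₀, Function.update_self,
          Finset.prod_congr rfl fun i hi => by
            rw [Function.update_of_ne (by simpa using hi)],
          Finset.prod_const, Finset.card_compl, Finset.card_singleton, Fintype.card_fin,
          ← ENNReal.ofReal_pow (by positivity), ← ENNReal.ofReal_mul (by norm_num),
          ← ENNReal.ofReal_natCast, ← ENNReal.ofReal_mul (by positivity), hpow]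
        ring_nf

lemma toSphere_norm_sub_sq_lt_le {e : E} (he : ‖e‖ = 1) {δ : ℝ} (hδ : 0 < δ) :
    (volume : Measure E).toSphere {ω | ‖(ω : E) - e‖ ^ 2 < δ} ≤
      ENNReal.ofReal (finrank ℝ E * 2 ^ finrank ℝ E * δ ^ (((finrank ℝ E : ℝ) - 1) / 2)) := by
  have hd : 1 ≤ finrank ℝ E :=
    finrank_pos_iff_exists_ne_zero.mpr ⟨e, norm_ne_zero_iff.mp (by simp [he])⟩
  have hset : {ω : sphere (0 : E) 1 | ‖(ω : E) - e‖ ^ 2 < δ} =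
      {ω : sphere (0 : E) 1 | ‖(ω : E) - e‖ < √δ} :=
    Set.ext fun _ => (lt_sqrt (norm_nonneg _)).symm
  have hpow : √δ ^ (finrank ℝ E - 1) = δ ^ (((finrank ℝ E : ℝ) - 1) / 2) := by
    rw [sqrt_eq_rpow, ← rpow_natCast, ← rpow_mul hδ.le, Nat.cast_sub hd]
    ring_nf
  rw [hset, ← hpow]
  exact toSphere_norm_sub_lt_le he (sqrt_nonneg δ)

theorem exists_lintegral_exp_inner_toSphere_le [Nontrivial E] :
    ∃ C > 0, ∀ x : E, ∫⁻ ω : sphere (0 : E) 1, ENNReal.ofReal (exp ⟪x, ω⟫)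
        ∂(volume : Measure E).toSphere ≤
      ENNReal.ofReal (C * (1 + ‖x‖) ^ (-(((finrank ℝ E : ℝ) - 1) / 2)) * exp ‖x‖) := by
  set d := finrank ℝ E
  set p := ((d : ℝ) - 1) / 2
  set S := ∑' k : ℕ, ((k : ℝ) + 1) ^ p * exp (-k)
  have hS : 0 < S :=
    (summable_add_one_rpow_mul_exp_neg p).tsum_pos (fun _ => by positivity) 0 (by simp)
  have hd : (0 : ℝ) < d := by exact_mod_cast finrank_pos
  refine ⟨exp 2 * (d * 2 ^ d) * S * 2 ^ p, by positivity, fun x => ?_⟩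
  obtain ⟨e, he, hx⟩ := exists_norm_eq_one_smul_eq x
  set r := ‖x‖
  have hρ : 0 < (1 + r) / 2 := by positivity
  have hpt (ω : sphere (0 : E) 1) : ENNReal.ofReal (exp ⟪x, ω⟫) ≤
      ENNReal.ofReal (exp (2 + r)) *
        ENNReal.ofReal (exp (-((1 + r) / 2 * ‖(ω : E) - e‖ ^ 2))) := by
    have hω : ‖(ω : E)‖ = 1 := norm_eq_of_mem_sphere ω
    have hdist : ‖(ω : E) - e‖ ≤ 2 := (norm_sub_le _ _).trans (by rw [hω, he]; norm_num)
    rw [← ENNReal.ofReal_mul (exp_nonneg _), ← exp_add, ← hx,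
      inner_smul_eq_sub_norm_sub_sq he hω]
    gcongr
    nlinarith [norm_nonneg ((ω : E) - e)]
  have hlayer := lintegral_exp_neg_mul_le (μ := (volume : Measure E).toSphere)
    (f := fun ω => ‖(ω : E) - e‖ ^ 2) (by fun_prop) (fun _ => by positivity) (by positivity)
    (fun δ hδ => toSphere_norm_sub_sq_lt_le he hδ) hρ
  calc _ ≤ ∫⁻ ω : sphere (0 : E) 1, ENNReal.ofReal (exp (2 + r)) *
        ENNReal.ofReal (exp (-((1 + r) / 2 * ‖(ω : E) - e‖ ^ 2)))
          ∂(volume : Measure E).toSphere :=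
        lintegral_mono hpt
    _ = ENNReal.ofReal (exp (2 + r)) * ∫⁻ ω : sphere (0 : E) 1,
        ENNReal.ofReal (exp (-((1 + r) / 2 * ‖(ω : E) - e‖ ^ 2)))
          ∂(volume : Measure E).toSphere :=
        lintegral_const_mul' _ _ ENNReal.ofReal_ne_top
    _ ≤ ENNReal.ofReal (exp (2 + r)) * ENNReal.ofReal (d * 2 ^ d * S * ((1 + r) / 2) ^ (-p)) := by
        gcongr
    _ = _ := by
        rw [← ENNReal.ofReal_mul (exp_nonneg _), exp_add, div_rpow (by positivity) zero_le_two,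
          rpow_neg zero_le_two, div_inv_eq_mul]
        congr 1
        ring

end InnerProductSpace

/-- Yordanov–Zhang pointwise bound: for `n ≥ 2` there is `C = C(n) > 0` with
`φ₁(x) ≤ C (1+|x|)^{-(n-1)/2} e^{|x|}` for all `x`. -/
theorem phi1_pointwise_bound {n : ℕ} (hn : 2 ≤ n) :
    ∃ C > (0 : ℝ), ∀ x : EuclideanSpace ℝ (Fin n),
      phi1 n x ≤ C * (1 + ‖x‖) ^ (-(((n : ℝ) - 1) / 2)) * Real.exp ‖x‖ := by
  have : Nonempty (Fin n) := ⟨⟨0, by omega⟩⟩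
  obtain ⟨C, hC, hbound⟩ :=
    exists_lintegral_exp_inner_toSphere_le (E := EuclideanSpace ℝ (Fin n))
  refine ⟨C, hC, fun x => ?_⟩
  rw [phi1, if_neg (by omega), integral_eq_lintegral_of_nonneg_ae
    (ae_of_all _ fun _ => (exp_pos _).le) (by fun_prop)]
  refine ENNReal.toReal_le_of_le_ofReal (by positivity) ?_
  simpa [finrank_euclideanSpace] using hbound x
end
end

section
/- For every n ≥ 1 and every constant R > 0 there exists a constant C₁ = C₁(n,R) > 0 such that for all t ≥ 0, ∫_{|x| ≤ t+R} ψ(x,t) dx ≤ C₁ (t+1)^{(n−1)/2}, where the integral is over the ball {x ∈ ℝⁿ : |x| ≤ t+R}. -/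
open MeasureTheory Real Set

noncomputable section

/-!
A reflection carries the direction `ω` to the first coordinate axis, so it suffices to bound
`∫_{|y| ≤ r} e^{y₀} dy`. On the ball, `|y'|² ≤ r² - y₀² ≤ 2r (r - y₀)` with `y₀ ≤ r`, so
`e^{y₀} ≤ e^{r/2} · 1_{y₀ ≤ r} e^{y₀/2} · ∏_{i ≥ 1} e^{-y_i²/(4r)}`. The right-hand side is a
product of one-dimensional integrable functions, whose integral is `2 e^r (4πr)^{(n-1)/2}`.
Integrating over `ω` (Fubini; for `n = 1` a sum over `ω = ±1`) costs only the finite mass of the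
sphere, and with `r = t + R` the factor `e^{-t}` in `ψ` cancels the `e^{t+R}`.
-/

section Reflection

variable {E : Type*} [NormedAddCommGroup E] [InnerProductSpace ℝ E] [FiniteDimensional ℝ E]
  [MeasurableSpace E] [BorelSpace E]

theorem setIntegral_closedBall_comp_inner_eq_of_norm_eq (f : ℝ → ℝ) {u v : E}
    (h : ‖u‖ = ‖v‖) (r : ℝ) :
    ∫ x in Metric.closedBall 0 r, f (inner ℝ x u)
      = ∫ x in Metric.closedBall 0 r, f (inner ℝ x v) := by
  set ρ := (ℝ ∙ (v - u))ᗮ.reflection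
  have hρ : ∀ x, inner ℝ (ρ x) u = inner ℝ x v := fun x => by
    rw [← Submodule.reflection_sub h.symm]
    exact ρ.inner_map_map x v
  rw [← ρ.measurePreserving.setIntegral_preimage_emb ρ.toHomeomorph.measurableEmbedding,
    LinearIsometryEquiv.preimage_closedBall, map_zero]
  simp only [hρ]

end Reflection

namespace EuclideanSpace

variable {ι : Type*} [Fintype ι]

theorem integral_fintype_prod_eq_prod (f : ι → ℝ → ℝ) :
    ∫ y : EuclideanSpace ℝ ι, ∏ i, f i (y i) = ∏ i, ∫ s, f i s := by
  rw [← (volume_preserving_symm_measurableEquiv_toLp ι).symm.integral_comp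
    (MeasurableEquiv.measurableEmbedding _)]
  exact MeasureTheory.integral_fintype_prod_volume_eq_prod f

theorem integrable_fintype_prod {f : ι → ℝ → ℝ} (hf : ∀ i, Integrable (f i)) :
    Integrable fun y : EuclideanSpace ℝ ι => ∏ i, f i (y i) := by
  rw [← (volume_preserving_symm_measurableEquiv_toLp ι).symm.integrable_comp_emb
    (MeasurableEquiv.measurableEmbedding _)]
  exact Integrable.fintype_prod_dep hf

theorem integrableOn_exp_inner_closedBall (ω : EuclideanSpace ℝ ι) (r : ℝ) :
    IntegrableOn (fun x => exp (inner ℝ x ω)) (Metric.closedBall 0 r) :=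
  (by fun_prop : Continuous fun x : EuclideanSpace ℝ ι => exp (inner ℝ x ω)).continuousOn
    |>.integrableOn_compact (isCompact_closedBall _ _)

end EuclideanSpace

/-- Coordinate factors of a majorant of `y ↦ e^{y₀ - r/2}` on the ball of radius `r`. -/
def ballMajorant (m : ℕ) (r : ℝ) : Fin (m + 1) → ℝ → ℝ :=
  Fin.cons ((Iic r).indicator fun s => exp (s / 2)) fun _ s => exp (-(4 * r)⁻¹ * s ^ 2)

section BallMajorant

variable {m : ℕ} {r : ℝ}

theorem ballMajorant_nonneg (i : Fin (m + 1)) (s : ℝ) : 0 ≤ ballMajorant m r i s := by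
  cases i using Fin.cases with
  | zero => exact indicator_nonneg (fun _ _ => (exp_pos _).le) s
  | succ i => exact (exp_pos _).le

theorem integrable_ballMajorant (hr : 0 < r) (i : Fin (m + 1)) :
    Integrable (ballMajorant m r i) := by
  cases i using Fin.cases with
  | zero =>
    refine (integrable_indicator_iff measurableSet_Iic).2 ?_
    simpa only [div_eq_inv_mul] using integrableOn_exp_mul_Iic (by norm_num : (0 : ℝ) < 2⁻¹) r
  | succ i => exact integrable_exp_neg_mul_sq (by positivity)

theorem integral_ballMajorant_zero : ∫ s, ballMajorant m r 0 s = 2 * exp (r / 2) := by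
  simp only [ballMajorant, Fin.cons_zero, integral_indicator measurableSet_Iic, div_eq_inv_mul,
    integral_exp_mul_Iic (by norm_num : (0 : ℝ) < 2⁻¹)]
  ring

theorem integral_ballMajorant_succ (hr : 0 < r) (i : Fin m) :
    ∫ s, ballMajorant m r i.succ s = √(4 * π * r) := by
  simp only [ballMajorant, Fin.cons_succ, integral_gaussian]
  congr 1
  field_simp

theorem integral_prod_ballMajorant (hr : 0 < r) :
    ∫ y : EuclideanSpace ℝ (Fin (m + 1)), ∏ i, ballMajorant m r i (y i)
      = 2 * exp (r / 2) * √(4 * π * r) ^ m := by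
  rw [EuclideanSpace.integral_fintype_prod_eq_prod, Fin.prod_univ_succ,
    integral_ballMajorant_zero]
  simp [integral_ballMajorant_succ hr]

theorem exp_le_mul_prod_ballMajorant (hr : 0 < r) {y : EuclideanSpace ℝ (Fin (m + 1))}
    (hy : ‖y‖ ≤ r) : exp (y 0) ≤ exp (r / 2) * ∏ i, ballMajorant m r i (y i) := by
  set S := ∑ i : Fin m, y i.succ ^ 2
  have hS : 0 ≤ S := Finset.sum_nonneg fun _ _ => sq_nonneg _
  have hsq : y 0 ^ 2 + S ≤ r ^ 2 := by
    have := EuclideanSpace.norm_sq_eq y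
    simp only [Real.norm_eq_abs, sq_abs, Fin.sum_univ_succ] at this
    nlinarith [norm_nonneg y]
  have hy0 : y 0 ≤ r := by nlinarith
  have hgauss : (4 * r)⁻¹ * S ≤ (r - y 0) / 2 := by
    rw [inv_mul_le_iff₀ (by positivity)]
    nlinarith
  rw [Fin.prod_univ_succ]
  simp only [ballMajorant, Fin.cons_zero, Fin.cons_succ, indicator_of_mem (mem_Iic.2 hy0),
    ← exp_sum, ← exp_add, exp_le_exp, ← Finset.mul_sum]
  linarith

theorem setIntegral_closedBall_exp_coord_le (hr : 0 < r) :
    ∫ y in Metric.closedBall (0 : EuclideanSpace ℝ (Fin (m + 1))) r, exp (y 0)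
      ≤ 2 * exp r * √(4 * π * r) ^ m := by
  have hG := (EuclideanSpace.integrable_fintype_prod
    (integrable_ballMajorant (m := m) hr)).const_mul (exp (r / 2))
  have hexp : Continuous fun y : EuclideanSpace ℝ (Fin (m + 1)) => exp (y 0) := by fun_prop
  calc ∫ y in Metric.closedBall (0 : EuclideanSpace ℝ (Fin (m + 1))) r, exp (y 0)
      ≤ ∫ y in Metric.closedBall (0 : EuclideanSpace ℝ (Fin (m + 1))) r,
          exp (r / 2) * ∏ i, ballMajorant m r i (y i) :=
        setIntegral_mono_on (hexp.continuousOn.integrableOn_compact (isCompact_closedBall _ _))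
          hG.integrableOn measurableSet_closedBall
          fun y hy => exp_le_mul_prod_ballMajorant hr (mem_closedBall_zero_iff.1 hy)
    _ ≤ ∫ y : EuclideanSpace ℝ (Fin (m + 1)), exp (r / 2) * ∏ i, ballMajorant m r i (y i) :=
        setIntegral_le_integral hG (Filter.Eventually.of_forall fun y =>
          mul_nonneg (exp_pos _).le (Finset.prod_nonneg fun i _ => ballMajorant_nonneg i _))
    _ = 2 * exp r * √(4 * π * r) ^ m := by
        rw [integral_const_mul, integral_prod_ballMajorant hr, ← add_halves r, exp_add,
          add_halves]
        ring

theorem setIntegral_closedBall_exp_inner_le (hr : 0 < r) {ω : EuclideanSpace ℝ (Fin (m + 1))}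
    (hω : ‖ω‖ = 1) :
    ∫ x in Metric.closedBall 0 r, exp (inner ℝ x ω) ≤ 2 * exp r * √(4 * π * r) ^ m := by
  have hω' : ‖ω‖ = ‖EuclideanSpace.single (0 : Fin (m + 1)) (1 : ℝ)‖ := by simp [hω]
  rw [setIntegral_closedBall_comp_inner_eq_of_norm_eq exp hω']
  simpa [EuclideanSpace.inner_single_right] using setIntegral_closedBall_exp_coord_le (m := m) hr

theorem setIntegral_closedBall_phi1_le (hm : m ≠ 0) (hr : 0 < r) :
    ∫ x in Metric.closedBall (0 : EuclideanSpace ℝ (Fin (m + 1))) r, phi1 (m + 1) x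
      ≤ (volume : Measure (EuclideanSpace ℝ (Fin (m + 1)))).toSphere.real univ
        * (2 * exp r * √(4 * π * r) ^ m) := by
  set B := Metric.closedBall (0 : EuclideanSpace ℝ (Fin (m + 1))) r
  set σ := (volume : Measure (EuclideanSpace ℝ (Fin (m + 1)))).toSphere
  have : IsFiniteMeasure (volume.restrict B) :=
    isFiniteMeasure_restrict.2 measure_closedBall_lt_top.ne
  have hint : Integrable (Function.uncurry fun x
      (ω : Metric.sphere (0 : EuclideanSpace ℝ (Fin (m + 1))) 1) =>
      exp (inner ℝ x (ω : EuclideanSpace ℝ (Fin (m + 1))))) ((volume.restrict B).prod σ) := by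
    refine Integrable.of_bound (by fun_prop) (exp r) ?_
    rw [Measure.restrict_prod_eq_prod_univ]
    filter_upwards [ae_restrict_mem (measurableSet_closedBall.prod MeasurableSet.univ)] with p hp
    rw [Function.uncurry_def, Real.norm_eq_abs, abs_of_pos (exp_pos _), exp_le_exp]
    calc inner ℝ p.1 (p.2 : EuclideanSpace ℝ (Fin (m + 1)))
        ≤ ‖p.1‖ * ‖(p.2 : EuclideanSpace ℝ (Fin (m + 1)))‖ := real_inner_le_norm _ _
      _ ≤ r := by simpa [B] using hp.1
  calc ∫ x in B, phi1 (m + 1) x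
      = ∫ ω, (∫ x in B, exp (inner ℝ x (ω : EuclideanSpace ℝ (Fin (m + 1))))) ∂σ := by
        simp only [phi1, if_neg (by omega : m + 1 ≠ 1)]
        exact integral_integral_swap hint
    _ ≤ ∫ _ω, 2 * exp r * √(4 * π * r) ^ m ∂σ :=
        integral_mono_of_nonneg
          (Filter.Eventually.of_forall fun _ => integral_nonneg fun _ => (exp_pos _).le)
          (integrable_const _) (Filter.Eventually.of_forall fun ω =>
            setIntegral_closedBall_exp_inner_le hr (mem_sphere_zero_iff_norm.1 ω.2))
    _ = σ.real univ * (2 * exp r * √(4 * π * r) ^ m) := by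
        rw [integral_const, smul_eq_mul]

end BallMajorant

theorem setIntegral_closedBall_phi1_one_le {r : ℝ} (hr : 0 < r) :
    ∫ x in Metric.closedBall (0 : EuclideanSpace ℝ (Fin 1)) r, phi1 1 x
      ≤ 2 * (2 * exp r) := by
  set e := EuclideanSpace.single (0 : Fin 1) (1 : ℝ)
  have hphi : ∀ x, phi1 1 x = exp (inner ℝ x e) + exp (inner ℝ x (-e)) := fun x => by
    simp [phi1, e, EuclideanSpace.inner_single_right]
  have he : ‖e‖ = 1 := by simp [e]
  have h₁ := setIntegral_closedBall_exp_inner_le (m := 0) hr he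
  have h₂ := setIntegral_closedBall_exp_inner_le (m := 0) hr ((norm_neg e).trans he)
  simp only [pow_zero, mul_one] at h₁ h₂
  simp only [hphi]
  rw [integral_add (EuclideanSpace.integrableOn_exp_inner_closedBall _ _)
    (EuclideanSpace.integrableOn_exp_inner_closedBall _ _)]
  linarith

theorem exists_setIntegral_closedBall_phi1_le (m : ℕ) :
    ∃ K ≥ (0 : ℝ), ∀ r > 0,
      ∫ x in Metric.closedBall (0 : EuclideanSpace ℝ (Fin (m + 1))) r, phi1 (m + 1) x
        ≤ K * (2 * exp r * √(4 * π * r) ^ m) := by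
  rcases eq_or_ne m 0 with rfl | hm
  · exact ⟨2, zero_le_two, fun r hr => by simpa using setIntegral_closedBall_phi1_one_le hr⟩
  · exact ⟨_, measureReal_nonneg, fun r hr => setIntegral_closedBall_phi1_le hm hr⟩

theorem sqrt_pow_le_mul_rpow (m : ℕ) {t R : ℝ} (ht : 0 ≤ t) (hR : 0 ≤ R) :
    √(4 * π * (t + R)) ^ m ≤ √(4 * π * (R + 1)) ^ m * (t + 1) ^ ((m : ℝ) / 2) := by
  have hsqrt : √(t + 1) ^ m = (t + 1) ^ ((m : ℝ) / 2) := by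
    rw [sqrt_eq_rpow, ← rpow_natCast, ← rpow_mul (by linarith)]
    ring_nf
  rw [← hsqrt, ← mul_pow, ← sqrt_mul (by positivity)]
  gcongr ?_ ^ _
  exact sqrt_le_sqrt (by nlinarith [pi_pos, mul_nonneg hR ht])

/-- For every `n ≥ 1` and `R > 0` there is `C₁ = C₁(n,R) > 0` such that
`∫_{|x| ≤ t+R} ψ(x,t) dx ≤ C₁ (t+1)^{(n-1)/2}` for all `t ≥ 0`. -/
theorem psi_ball_integral_bound {n : ℕ} (hn : 1 ≤ n) {R : ℝ} (hR : 0 < R) :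
    ∃ C₁ > (0 : ℝ), ∀ t : ℝ, 0 ≤ t →
      (∫ x in Metric.closedBall (0 : EuclideanSpace ℝ (Fin n)) (t + R), psi n x t)
        ≤ C₁ * (t + 1) ^ (((n : ℝ) - 1) / 2) := by
  obtain ⟨m, rfl⟩ := Nat.exists_eq_add_of_le' hn
  obtain ⟨K, hK, hphi⟩ := exists_setIntegral_closedBall_phi1_le m
  refine ⟨2 * K * exp R * √(4 * π * (R + 1)) ^ m + 1, by positivity, fun t ht => ?_⟩
  have hexp : ((↑(m + 1) : ℝ) - 1) / 2 = m / 2 := by push_cast; ring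
  rw [hexp]
  calc ∫ x in Metric.closedBall 0 (t + R), psi (m + 1) x t
      = exp (-t) * ∫ x in Metric.closedBall 0 (t + R), phi1 (m + 1) x := integral_const_mul _ _
    _ ≤ exp (-t) * (K * (2 * exp (t + R) * √(4 * π * (t + R)) ^ m)) := by
        gcongr
        exact hphi _ (by positivity)
    _ = 2 * K * exp R * √(4 * π * (t + R)) ^ m := by
        rw [exp_add, exp_neg]
        field_simp
    _ ≤ 2 * K * exp R * (√(4 * π * (R + 1)) ^ m * (t + 1) ^ ((m : ℝ) / 2)) := by
        gcongr
        exact sqrt_pow_le_mul_rpow m ht hR.le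
    _ ≤ (2 * K * exp R * √(4 * π * (R + 1)) ^ m + 1) * (t + 1) ^ ((m : ℝ) / 2) := by
        rw [← mul_assoc]
        gcongr
        linarith
end
end

section
/- (Critical ODE blow-up lemma) Let p > 1, K > 0 and c > 0. Then there exist ε₀ > 0 and C > 0 such that for every 0 < ε ≤ ε₀ the following holds: if T > 0 and H : [0,T) → ℝ is differentiable with H(0) ≥ c ε and H'(t) ≥ K (1+t)^{−1} H(t)^p for all t ∈ [0,T), then T ≤ exp(C ε^{−(p−1)}). -/
open Real Set

/-!
Wherever `H > 0`, the inequality `H' ≥ K (1+t)⁻¹ H^p` says exactly that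
`H^(1-p) + (p-1) K log (1+t)` is nonincreasing, and `H` stays positive because `H' > 0` wherever
`H > 0`. Dropping the positive term `H(t)^(1-p)` gives `(p-1) K log (1+t) < H(0)^(1-p) ≤ (c ε)^(1-p)`
on `[0,T)`, which bounds `T` by `exp (C ε^(-(p-1)))` with `C = c^(1-p) / ((p-1) K)`.
-/

theorem pos_of_hasDerivWithinAt_of_deriv_pos_of_pos {f f' : ℝ → ℝ} {a b : ℝ}
    (hf : ∀ x ∈ Ico a b, HasDerivWithinAt f (f' x) (Ico a b) x) (ha : 0 < f a)
    (hf' : ∀ x ∈ Ico a b, 0 < f x → 0 < f' x) : ∀ x ∈ Ico a b, 0 < f x := by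
  intro x hx
  have hsub : Icc a x ⊆ Ico a b := Icc_subset_Ico_right hx.2
  -- `f` can never descend to the level `f a / 2`, where its derivative is positive.
  have hfence : -f x ≤ -(f a / 2) :=
    image_le_of_deriv_right_lt_deriv_boundary (f := -f) (B := fun _ => -(f a / 2)) (B' := 0)
      ((HasDerivWithinAt.continuousOn hf).neg.mono hsub)
      (fun y hy => ((hf y (hsub (Ico_subset_Icc_self hy))).neg).mono_of_mem_nhdsWithin
        (Ico_mem_nhdsGE_of_mem (hsub (Ico_subset_Icc_self hy))))
      (by simp only [Pi.neg_apply]; linarith) (fun _ => hasDerivAt_const _ _)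
      (fun y hy hy' => by
        have := hf' y (hsub (Ico_subset_Icc_self hy)) (by simp only [Pi.neg_apply] at hy'; linarith)
        simp only [Pi.zero_apply]; linarith)
      ⟨hx.1, le_rfl⟩
  linarith

theorem antitoneOn_rpow_one_sub_add_log_one_add {H H' : ℝ → ℝ} {p K T : ℝ} (hp : 1 ≤ p)
    (hH : ∀ t ∈ Ico 0 T, HasDerivWithinAt H (H' t) (Ico 0 T) t)
    (hpos : ∀ t ∈ Ico 0 T, 0 < H t)
    (hode : ∀ t ∈ Ico 0 T, K * (1 + t)⁻¹ * H t ^ p ≤ H' t) :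
    AntitoneOn (fun t => H t ^ (1 - p) + (p - 1) * K * log (1 + t)) (Ico 0 T) := by
  have hderiv : ∀ t ∈ Ico 0 T, HasDerivWithinAt (fun t => H t ^ (1 - p) + (p - 1) * K * log (1 + t))
      (H' t * (1 - p) * H t ^ (1 - p - 1) + (p - 1) * K * (1 / (1 + t))) (Ico 0 T) t := fun t ht =>
    ((hH t ht).rpow_const (Or.inl (hpos t ht).ne')).add
      ((((hasDerivWithinAt_id t _).const_add 1).log (by simp only [id]; linarith [ht.1])).const_mul _)
  have hint : interior (Ico (0 : ℝ) T) = Ioo 0 T := interior_Ico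
  refine antitoneOn_of_hasDerivWithinAt_nonpos (convex_Ico 0 T)
    (HasDerivWithinAt.continuousOn hderiv)
    (fun t ht => hint ▸ (hderiv t (Ioo_subset_Ico_self (hint ▸ ht))).mono Ioo_subset_Ico_self)
    (fun t ht => ?_)
  have ht' : t ∈ Ico 0 T := Ioo_subset_Ico_self (hint ▸ ht)
  have hHt := hpos t ht'
  have hcancel : H t ^ p * H t ^ (1 - p - 1) = 1 := by
    rw [← rpow_add hHt]; norm_num
  have hmul := mul_le_mul_of_nonneg_right (hode t ht') (rpow_pos_of_pos hHt (1 - p - 1)).le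
  rw [mul_assoc, hcancel, mul_one, ← one_div] at hmul
  linarith [mul_le_mul_of_nonneg_left hmul (sub_nonneg.2 hp)]

theorem log_one_add_lt_rpow_one_sub_of_ode {H H' : ℝ → ℝ} {p K T : ℝ} (hp : 1 ≤ p)
    (hH : ∀ t ∈ Ico 0 T, HasDerivWithinAt H (H' t) (Ico 0 T) t)
    (hpos : ∀ t ∈ Ico 0 T, 0 < H t)
    (hode : ∀ t ∈ Ico 0 T, K * (1 + t)⁻¹ * H t ^ p ≤ H' t) :
    ∀ t ∈ Ico 0 T, (p - 1) * K * log (1 + t) < H 0 ^ (1 - p) := by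
  intro t ht
  have h0 : (0 : ℝ) ∈ Ico 0 T := ⟨le_rfl, ht.1.trans_lt ht.2⟩
  have hG := antitoneOn_rpow_one_sub_add_log_one_add hp hH hpos hode h0 ht ht.1
  have hHt : 0 < H t ^ (1 - p) := rpow_pos_of_pos (hpos t ht) _
  simp only [add_zero, log_one, mul_zero] at hG
  linarith

theorem le_exp_of_forall_log_one_add_lt {T B : ℝ} (h : ∀ t ∈ Ico 0 T, log (1 + t) < B) :
    T ≤ exp B := by
  by_contra! hT
  have hlt := h (exp B) ⟨(exp_pos B).le, hT⟩
  have hgt : B < log (1 + exp B) := by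
    simpa only [log_exp] using log_lt_log (exp_pos B) (lt_one_add (exp B))
  linarith

/-- Critical ODE blow-up lemma: if `H' ≥ K (1+t)^{-1} H^p` on `[0,T)` with `p > 1`
and `H(0) ≥ c ε`, then `T ≤ exp(C ε^{-(p-1)})`. -/
theorem ode_blowup_critical {p K c : ℝ} (hp : 1 < p) (hK : 0 < K) (hc : 0 < c) :
    ∃ ε₀ > (0 : ℝ), ∃ C > (0 : ℝ), ∀ ε : ℝ, 0 < ε → ε ≤ ε₀ →
      ∀ (T : ℝ) (H H' : ℝ → ℝ), 0 < T →
        (∀ t ∈ Set.Ico (0 : ℝ) T, HasDerivWithinAt H (H' t) (Set.Ico (0 : ℝ) T) t) →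
        c * ε ≤ H 0 →
        (∀ t ∈ Set.Ico (0 : ℝ) T, K * (1 + t)⁻¹ * H t ^ p ≤ H' t) →
        T ≤ Real.exp (C * ε ^ (-(p - 1))) := by
  have hpK : 0 < (p - 1) * K := mul_pos (sub_pos.2 hp) hK
  refine ⟨1, one_pos, c ^ (1 - p) / ((p - 1) * K), div_pos (rpow_pos_of_pos hc _) hpK, ?_⟩
  intro ε hε _ T H H' _ hH hH0 hode
  have hcε : 0 < c * ε := mul_pos hc hε
  have hpos : ∀ t ∈ Ico 0 T, 0 < H t :=
    pos_of_hasDerivWithinAt_of_deriv_pos_of_pos hH (hcε.trans_le hH0) fun t ht hHt => by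
      have : 0 ≤ t := ht.1
      exact (by positivity : 0 < K * (1 + t)⁻¹ * H t ^ p).trans_le (hode t ht)
  refine le_exp_of_forall_log_one_add_lt fun t ht => ?_
  have hdata : H 0 ^ (1 - p) ≤ c ^ (1 - p) * ε ^ (-(p - 1)) := by
    rw [← neg_sub, ← mul_rpow hc.le hε.le]
    exact rpow_le_rpow_of_nonpos hcε hH0 (by linarith)
  rw [div_mul_eq_mul_div, lt_div_iff₀ hpK, mul_comm]
  linarith [log_one_add_lt_rpow_one_sub_of_ode hp.le hH hpos hode t ht]
end

section
/- (Comparison argument, scattering case) Let μ > 0, β > 1, m(t) := exp(μ (1+t)^{1−β}/(1−β)), and let A ≥ 0. Suppose F : [0,∞) → ℝ is continuous, F(0) ≥ A, and for all t ≥ 0, e^{2t} F(t) ≥ F(0) + A ∫₀ᵗ e^{2s} ds + ∫₀ᵗ (e^{2s}/m(s)) ( ∫₀ˢ m(r) μ (1+r)^{−β} F(r) dr ) ds. Then F(t) ≥ A/2 for all t ≥ 0. -/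
/-! Let `c = F T` be the minimum of `F` on `[0, t]` and `c⁻ = min c 0`. The kernel
`m(r) μ (1+r)^{-β}` is the nonnegative derivative `m'`, so the inner integral is at least
`c⁻ (m(s) - m(0))`, and because `c⁻ ≤ 0` the factor `1 - m(0)/m(s) ≤ 1` only helps:
`(e^{2s}/m(s)) c⁻ (m(s) - m(0)) ≥ c⁻ e^{2s}`. The inequality at `T` then reads
`F(0) + (A + c⁻)(e^{2T} - 1)/2 ≤ e^{2T} c`, which forces `c ≥ A/2`. -/

open Real Set MeasureTheory intervalIntegral

noncomputable section

/-- The Lai–Takamura multiplier `m(t) = exp(μ (1+t)^{1-β}/(1-β))`. -/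
def mlt (μ β t : ℝ) : ℝ :=
  Real.exp (μ * (1 + t) ^ (1 - β) / (1 - β))

lemma mlt_pos (μ β t : ℝ) : 0 < mlt μ β t := exp_pos _

lemma hasDerivAt_mlt (μ : ℝ) {β t : ℝ} (hβ : β ≠ 1) (ht : -1 < t) :
    HasDerivAt (mlt μ β) (mlt μ β t * (μ / (1 + t) ^ β)) t := by
  have h : 0 < 1 + t := by linarith
  have hpow := ((hasDerivAt_id' t).const_add 1).rpow_const (p := 1 - β) (.inl h.ne')
  refine ((hpow.const_mul μ).div_const (1 - β)).exp.congr_deriv ?_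
  rw [sub_sub_cancel_left, rpow_neg h.le, mlt]
  field_simp [sub_ne_zero.2 hβ.symm]

lemma continuousOn_mlt_kernel (μ β : ℝ) :
    ContinuousOn (fun r => mlt μ β r * (μ / (1 + r) ^ β)) (Ioi (-1)) := by
  intro r hr
  have h : 0 < 1 + r := by rw [mem_Ioi] at hr; linarith
  have hpow : ∀ p : ℝ, ContinuousAt (fun x : ℝ => (1 + x) ^ p) r := fun p =>
    (continuousAt_id.const_add 1).rpow_const (p := p) (.inl h.ne')
  exact ((((hpow _).const_mul μ).div_const _).rexp.mul
    (continuousAt_const.div (hpow β) (rpow_pos_of_pos h β).ne')).continuousWithinAt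

lemma integral_mlt_kernel (μ : ℝ) {β s : ℝ} (hβ : β ≠ 1) (hs : -1 < s) :
    ∫ r in (0 : ℝ)..s, mlt μ β r * (μ / (1 + r) ^ β) = mlt μ β s - mlt μ β 0 := by
  have hsub : uIcc 0 s ⊆ Ioi (-1) := ordConnected_Ioi.uIcc_subset (by norm_num) hs
  exact integral_eq_sub_of_hasDerivAt (fun r hr => hasDerivAt_mlt μ hβ (hsub hr))
    (((continuousOn_mlt_kernel μ β).mono hsub).intervalIntegrable)

lemma mul_sub_mlt_le_integral {μ β c s : ℝ} (hμ : 0 ≤ μ) (hβ : β ≠ 1) (hs : 0 ≤ s)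
    {F : ℝ → ℝ} (hF : ContinuousOn F (Icc 0 s)) (hc : ∀ r ∈ Icc 0 s, c ≤ F r) :
    c * (mlt μ β s - mlt μ β 0) ≤
      ∫ r in (0 : ℝ)..s, mlt μ β r * (μ / (1 + r) ^ β) * F r := by
  have hk : ContinuousOn (fun r => mlt μ β r * (μ / (1 + r) ^ β)) (Icc 0 s) :=
    (continuousOn_mlt_kernel μ β).mono fun r hr => by rw [mem_Ioi]; linarith [hr.1]
  rw [← integral_mlt_kernel μ hβ (by linarith), ← intervalIntegral.integral_const_mul]
  refine integral_mono_on hs ((hk.const_smul c).intervalIntegrable_of_Icc hs)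
    ((hk.mul hF).intervalIntegrable_of_Icc hs) fun r hr => ?_
  rw [mul_comm c]
  exact mul_le_mul_of_nonneg_left (hc r hr)
    (mul_nonneg (mlt_pos μ β r).le (div_nonneg hμ (rpow_nonneg (by linarith [hr.1]) _)))

lemma mul_integral_le_integral_div_mlt_mul_integral {μ β c T : ℝ} (hμ : 0 ≤ μ) (hβ : β ≠ 1)
    (hT : 0 ≤ T) (hc : c ≤ 0) {g F : ℝ → ℝ} (hg : ContinuousOn g (Icc 0 T))
    (hg0 : ∀ s ∈ Icc 0 T, 0 ≤ g s)
    (hF : ContinuousOn F (Icc 0 T)) (hcF : ∀ r ∈ Icc 0 T, c ≤ F r) :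
    c * ∫ s in (0 : ℝ)..T, g s ≤
      ∫ s in (0 : ℝ)..T, g s / mlt μ β s *
        ∫ r in (0 : ℝ)..s, mlt μ β r * (μ / (1 + r) ^ β) * F r := by
  have hm : ContinuousOn (mlt μ β) (Icc 0 T) := fun s hs =>
    (hasDerivAt_mlt μ hβ (by linarith [hs.1])).continuousAt.continuousWithinAt
  have hprim : ContinuousOn (fun s => ∫ r in (0 : ℝ)..s,
      mlt μ β r * (μ / (1 + r) ^ β) * F r) (Icc 0 T) := by
    have hk : ContinuousOn (fun r => mlt μ β r * (μ / (1 + r) ^ β)) (Icc 0 T) :=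
      (continuousOn_mlt_kernel μ β).mono fun r hr => by rw [mem_Ioi]; linarith [hr.1]
    have hint : IntegrableOn (fun r => mlt μ β r * (μ / (1 + r) ^ β) * F r) (uIcc 0 T) := by
      rw [uIcc_of_le hT]
      exact (hk.mul hF).integrableOn_Icc
    simpa only [uIcc_of_le hT] using continuousOn_primitive_interval hint
  rw [← intervalIntegral.integral_const_mul]
  refine integral_mono_on hT ((hg.const_smul c).intervalIntegrable_of_Icc hT)
    (((hg.div hm fun s _ => (mlt_pos μ β s).ne').mul hprim).intervalIntegrable_of_Icc hT)
    fun s hs => ?_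
  have hJ := mul_sub_mlt_le_integral (c := c) hμ hβ hs.1 (hF.mono (Icc_subset_Icc_right hs.2))
    fun r hr => hcF r ⟨hr.1, hr.2.trans hs.2⟩
  have hms := mlt_pos μ β s
  have hm0 := mlt_pos μ β 0
  calc c * g s
      ≤ c * g s + -c * (g s * (mlt μ β 0 / mlt μ β s)) :=
        le_add_of_nonneg_right (mul_nonneg (neg_nonneg.2 hc)
          (mul_nonneg (hg0 s hs) (div_pos hm0 hms).le))
    _ = g s / mlt μ β s * (c * (mlt μ β s - mlt μ β 0)) := by
        field_simp; ring
    _ ≤ _ := mul_le_mul_of_nonneg_left hJ (div_nonneg (hg0 s hs) hms.le)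

lemma integral_exp_two_mul (T : ℝ) :
    ∫ s in (0 : ℝ)..T, exp (2 * s) = (exp (2 * T) - 1) / 2 := by
  simp [integral_comp_mul_left (fun x => exp x)]
  ring

/-- Comparison argument in the scattering case: a continuous `F` with `F(0) ≥ A ≥ 0`
satisfying the Volterra-type integral inequality
`e^{2t} F(t) ≥ F(0) + A ∫₀ᵗ e^{2s} ds + ∫₀ᵗ (e^{2s}/m(s)) ∫₀ˢ m(r) μ(1+r)^{-β} F(r) dr ds`
satisfies `F(t) ≥ A/2` for all `t ≥ 0`. -/
theorem comparison_scattering {μ β A : ℝ} (hμ : 0 < μ) (hβ : 1 < β) (hA : 0 ≤ A)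
    (F : ℝ → ℝ) (hF : ContinuousOn F (Set.Ici 0)) (hF0 : A ≤ F 0)
    (hineq : ∀ t : ℝ, 0 ≤ t →
      F 0 + A * (∫ s in (0 : ℝ)..t, Real.exp (2 * s))
          + ∫ s in (0 : ℝ)..t,
              (Real.exp (2 * s) / mlt μ β s) *
                ∫ r in (0 : ℝ)..s, mlt μ β r * (μ / (1 + r) ^ β) * F r
        ≤ Real.exp (2 * t) * F t) :
    ∀ t : ℝ, 0 ≤ t → A / 2 ≤ F t := by
  intro t ht
  obtain ⟨T, hT, hmin⟩ := isCompact_Icc.exists_isMinOn (nonempty_Icc.2 ht)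
    (hF.mono Icc_subset_Ici_self)
  have hFT : ∀ r ∈ Icc 0 T, F T ≤ F r := fun r hr => hmin ⟨hr.1, hr.2.trans hT.2⟩
  have hvolterra := mul_integral_le_integral_div_mlt_mul_integral (g := fun s => exp (2 * s))
    hμ.le hβ.ne' hT.1 (min_le_right (F T) 0) (by fun_prop) (fun s _ => (exp_pos _).le)
    (hF.mono (Icc_subset_Icc_right hT.2 |>.trans Icc_subset_Ici_self))
    fun r hr => (min_le_left _ _).trans (hFT r hr)
  have hineqT := hineq T hT.1
  rw [integral_exp_two_mul] at hineqT hvolterra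
  have hE : 1 ≤ exp (2 * T) := one_le_exp (by linarith [hT.1])
  refine le_trans ?_ (hmin (right_mem_Icc.2 ht))
  rcases min_cases (F T) 0 with ⟨hc, -⟩ | ⟨hc, -⟩ <;> rw [hc] at hvolterra <;> nlinarith
end
end

section
/- (Comparison argument, scale invariant case) Let μ > 0 and let A ≥ 0. Suppose F : [0,∞) → ℝ is continuous, F(0) ≥ A, and for all t ≥ 0, e^{2t} F(t) ≥ F(0) + A ∫₀ᵗ e^{2s} (1+s)^{−μ} ds + ∫₀ᵗ e^{2s} (1+s)^{−μ} ( ∫₀ˢ μ (1+r)^{μ−1} F(r) dr ) ds. Then F(t) ≥ A / (2(1+t)^μ) for all t ≥ 0. -/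
open Real Set MeasureTheory intervalIntegral

noncomputable section

/-- Comparison argument in the scale invariant case: a continuous `F` with `F(0) ≥ A ≥ 0`
satisfying
`e^{2t} F(t) ≥ F(0) + A ∫₀ᵗ e^{2s}(1+s)^{-μ} ds + ∫₀ᵗ e^{2s}(1+s)^{-μ} ∫₀ˢ μ(1+r)^{μ-1} F(r) dr ds`
satisfies `F(t) ≥ A/(2(1+t)^μ)` for all `t ≥ 0`. -/
theorem comparison_scaleinvariant {μ A : ℝ} (hμ : 0 < μ) (hA : 0 ≤ A)
    (F : ℝ → ℝ) (hF : ContinuousOn F (Set.Ici 0)) (hF0 : A ≤ F 0)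
    (hineq : ∀ t : ℝ, 0 ≤ t →
      F 0 + A * (∫ s in (0 : ℝ)..t, Real.exp (2 * s) * (1 + s) ^ (-μ))
          + ∫ s in (0 : ℝ)..t,
              Real.exp (2 * s) * (1 + s) ^ (-μ) *
                ∫ r in (0 : ℝ)..s, μ * (1 + r) ^ (μ - 1) * F r
        ≤ Real.exp (2 * t) * F t) :
    ∀ t : ℝ, 0 ≤ t → A / (2 * (1 + t) ^ μ) ≤ F t := by
  -- continuity of the weight w s = e^{2s}(1+s)^{-μ} on Ici 0
  have hw : ContinuousOn (fun s : ℝ => Real.exp (2 * s) * (1 + s) ^ (-μ)) (Set.Ici (0:ℝ)) := by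
    apply ContinuousOn.mul
    · exact ((Real.continuous_exp).comp (continuous_const.mul continuous_id)).continuousOn
    · exact ((continuous_const.add continuous_id).continuousOn).rpow_const
        (fun x hx => Or.inl (by have := mem_Ici.mp hx; simp; positivity))
  -- continuity of the kernel g r = μ (1+r)^{μ-1} F r on Ici 0
  have hg : ContinuousOn (fun r : ℝ => μ * (1 + r) ^ (μ - 1) * F r) (Set.Ici (0:ℝ)) := by
    apply ContinuousOn.mul _ hF
    apply ContinuousOn.mul continuousOn_const
    exact ((continuous_const.add continuous_id).continuousOn).rpow_const
      (fun x hx => Or.inl (by have := mem_Ici.mp hx; simp; positivity))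
  -- integrability helpers
  have hsub : ∀ b : ℝ, 0 ≤ b → Set.uIcc (0:ℝ) b ⊆ Set.Ici (0:ℝ) := by
    intro b hb
    rw [Set.uIcc_of_le hb]
    exact fun x hx => hx.1
  have hwint : ∀ b : ℝ, 0 ≤ b →
      IntervalIntegrable (fun s : ℝ => Real.exp (2 * s) * (1 + s) ^ (-μ)) volume 0 b :=
    fun b hb => (hw.mono (hsub b hb)).intervalIntegrable
  have hgint : ∀ b : ℝ, 0 ≤ b →
      IntervalIntegrable (fun r : ℝ => μ * (1 + r) ^ (μ - 1) * F r) volume 0 b :=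
    fun b hb => (hg.mono (hsub b hb)).intervalIntegrable
  -- FTC: ∫₀ˢ μ (1+r)^{μ-1} dr = (1+s)^μ - 1
  have hFTC : ∀ s : ℝ, 0 ≤ s →
      (∫ r in (0:ℝ)..s, μ * (1 + r) ^ (μ - 1)) = (1 + s) ^ μ - 1 := by
    intro s hs
    have h := intervalIntegral.integral_eq_sub_of_hasDerivAt
      (f := fun y : ℝ => (1 + y) ^ μ) (f' := fun y : ℝ => μ * (1 + y) ^ (μ - 1)) (a := (0:ℝ)) (b := s)
      (fun x hx => by
        have hx0 : 0 ≤ x := ((Set.uIcc_of_le hs ▸ hx).1 : (0:ℝ) ≤ x)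
        have h1 : (0:ℝ) < 1 + x := by linarith
        have := (HasDerivAt.rpow_const (p := μ)
          ((hasDerivAt_id x).const_add (1:ℝ)) (Or.inl h1.ne'))
        simpa using this)
      (by
        apply ContinuousOn.intervalIntegrable
        apply ContinuousOn.mul continuousOn_const
        exact ((continuous_const.add continuous_id).continuousOn).rpow_const
          (fun x hx => Or.inl (by
            have hx0 : 0 ≤ x := (Set.uIcc_of_le hs ▸ hx).1
            simp; positivity)))
    simpa using h
  -- FTC: ∫₀ᵇ e^{2s} ds = (e^{2b} - 1)/2
  have hexpFTC : ∀ b : ℝ, (∫ s in (0:ℝ)..b, Real.exp (2 * s)) = (Real.exp (2 * b) - 1) / 2 := by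
    intro b
    have h := intervalIntegral.integral_eq_sub_of_hasDerivAt
      (f := fun y : ℝ => Real.exp (2 * y) / 2) (f' := fun y : ℝ => Real.exp (2 * y)) (a := (0:ℝ)) (b := b)
      (fun x _ => by
        have := ((Real.hasDerivAt_exp (2 * x)).comp x ((hasDerivAt_id x).const_mul 2)).div_const 2
        simpa [mul_comm] using this)
      ((Real.continuous_exp.comp (continuous_const.mul continuous_id)).intervalIntegrable 0 b)
    rw [h]
    beta_reduce
    rw [mul_zero, Real.exp_zero]
    ring
  -- Step 1: F is nonnegative on [0, ∞)
  have hnonneg : ∀ t : ℝ, 0 ≤ t → 0 ≤ F t := by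
    intro T hT
    obtain ⟨c, hc, hmin⟩ := (isCompact_Icc (a := (0:ℝ)) (b := T)).exists_isMinOn
      (Set.nonempty_Icc.2 hT) (hF.mono (fun x hx => hx.1))
    have hIccT : Set.Icc (0:ℝ) T ⊆ Set.Ici 0 := fun x hx => hx.1
    set m := F c with hm_def
    by_contra hneg
    push_neg at hneg
    have hmT : m ≤ F T := hmin (Set.mem_Icc.2 ⟨hT, le_refl T⟩)
    have hm : m < 0 := lt_of_le_of_lt hmT hneg
    have hc0 : 0 ≤ c := hc.1
    -- apply the hypothesis at c
    have H := hineq c hc0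
    -- F 0 ≥ 0
    have hF0' : (0:ℝ) ≤ F 0 := le_trans hA hF0
    -- A∫w ≥ 0
    have hAw : 0 ≤ A * ∫ s in (0:ℝ)..c, Real.exp (2 * s) * (1 + s) ^ (-μ) := by
      apply mul_nonneg hA
      apply intervalIntegral.integral_nonneg hc0
      intro u hu
      have h1 : (0:ℝ) ≤ 1 + u := by linarith [hu.1]
      positivity
    -- inner integral lower bound on [0,c]
    have hinner : ∀ s ∈ Set.Icc (0:ℝ) c,
        m * ((1 + s) ^ μ - 1) ≤ ∫ r in (0:ℝ)..s, μ * (1 + r) ^ (μ - 1) * F r := by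
      intro s hs
      have hs0 : (0:ℝ) ≤ s := hs.1
      have hlow : (∫ r in (0:ℝ)..s, μ * (1 + r) ^ (μ - 1) * m) = m * ((1 + s) ^ μ - 1) := by
        rw [intervalIntegral.integral_mul_const, hFTC s hs0, mul_comm]
      rw [← hlow]
      apply intervalIntegral.integral_mono_on hs0
      · apply ContinuousOn.intervalIntegrable
        apply ContinuousOn.mul _ continuousOn_const
        apply ContinuousOn.mul continuousOn_const
        exact ((continuous_const.add continuous_id).continuousOn).rpow_const
          (fun x hx => Or.inl (by
            have hx0 : 0 ≤ x := (Set.uIcc_of_le hs0 ▸ hx).1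
            simp; positivity))
      · exact hgint s hs0
      · intro r hr
        have hr0 : 0 ≤ r := hr.1
        have hrc : r ≤ c := le_trans hr.2 (le_trans hs.2 (le_refl c))
        have hFm : m ≤ F r := hmin (Set.mem_Icc.2 ⟨hr0, le_trans hrc hc.2⟩)
        have hk : 0 ≤ μ * (1 + r) ^ (μ - 1) := by positivity
        exact mul_le_mul_of_nonneg_left hFm hk
    -- the double integral lower bound
    have hD : m * (Real.exp (2 * c) - 1) / 2 ≤
        ∫ s in (0:ℝ)..c, Real.exp (2 * s) * (1 + s) ^ (-μ) *
          ∫ r in (0:ℝ)..s, μ * (1 + r) ^ (μ - 1) * F r := by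
      have hlow : (∫ s in (0:ℝ)..c, m * Real.exp (2 * s)) = m * (Real.exp (2 * c) - 1) / 2 := by
        rw [intervalIntegral.integral_const_mul, hexpFTC c]
        ring
      rw [← hlow]
      apply intervalIntegral.integral_mono_on hc0
      · exact (continuous_const.mul
          (Real.continuous_exp.comp (continuous_const.mul continuous_id))).intervalIntegrable 0 c
      · -- integrability of the product with the primitive
        apply ContinuousOn.intervalIntegrable
        apply ContinuousOn.mul (hw.mono (hsub c hc0))
        have : IntegrableOn (fun r : ℝ => μ * (1 + r) ^ (μ - 1) * F r) (Set.uIcc (0:ℝ) c) volume :=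
          (hg.mono (hsub c hc0)).integrableOn_compact isCompact_uIcc
        exact continuousOn_primitive_interval this
      · intro s hs
        have hs0 : (0:ℝ) ≤ s := hs.1
        have h1 : (0:ℝ) < 1 + s := by linarith
        have hprod : (1 + s) ^ (-μ) * (1 + s) ^ μ = 1 := by
          rw [← Real.rpow_add h1]; simp
        have hle1 : (1 + s) ^ (-μ) ≤ 1 :=
          Real.rpow_le_one_of_one_le_of_nonpos (by linarith) (by linarith)
        have hnn : (0:ℝ) ≤ (1 + s) ^ (-μ) := Real.rpow_nonneg (by linarith) _
        have hepos : (0:ℝ) < Real.exp (2 * s) := Real.exp_pos _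
        calc m * Real.exp (2 * s)
            ≤ Real.exp (2 * s) * (1 + s) ^ (-μ) * (m * ((1 + s) ^ μ - 1)) := by
              have heq : Real.exp (2 * s) * (1 + s) ^ (-μ) * (m * ((1 + s) ^ μ - 1))
                  = m * Real.exp (2 * s) - m * Real.exp (2 * s) * (1 + s) ^ (-μ) := by
                linear_combination (m * Real.exp (2 * s)) * hprod
              have h2 := mul_nonpos_of_nonpos_of_nonneg
                (mul_nonpos_of_nonpos_of_nonneg hm.le hepos.le) hnn
              linarith [heq]
          _ ≤ Real.exp (2 * s) * (1 + s) ^ (-μ) *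
                ∫ r in (0:ℝ)..s, μ * (1 + r) ^ (μ - 1) * F r := by
              apply mul_le_mul_of_nonneg_left (hinner s hs)
              positivity
    -- contradiction
    have hFc : Real.exp (2 * c) * m = Real.exp (2 * c) * F c := by rw [hm_def]
    have hconc : m * (Real.exp (2 * c) - 1) / 2 ≤ Real.exp (2 * c) * m := by
      calc m * (Real.exp (2 * c) - 1) / 2
          ≤ ∫ s in (0:ℝ)..c, Real.exp (2 * s) * (1 + s) ^ (-μ) *
              ∫ r in (0:ℝ)..s, μ * (1 + r) ^ (μ - 1) * F r := hD
        _ ≤ F 0 + A * (∫ s in (0:ℝ)..c, Real.exp (2 * s) * (1 + s) ^ (-μ)) +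
              ∫ s in (0:ℝ)..c, Real.exp (2 * s) * (1 + s) ^ (-μ) *
                ∫ r in (0:ℝ)..s, μ * (1 + r) ^ (μ - 1) * F r := by linarith
        _ ≤ Real.exp (2 * c) * F c := H
        _ = Real.exp (2 * c) * m := by rw [← hm_def]
    nlinarith [Real.exp_pos (2 * c), hm]
  -- Step 2: the quantitative bound
  intro t ht
  have H := hineq t ht
  have h1t : (0:ℝ) < 1 + t := by linarith
  -- the double integral is nonnegative
  have hD0 : 0 ≤ ∫ s in (0:ℝ)..t, Real.exp (2 * s) * (1 + s) ^ (-μ) *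
      ∫ r in (0:ℝ)..s, μ * (1 + r) ^ (μ - 1) * F r := by
    apply intervalIntegral.integral_nonneg ht
    intro s hs
    have hs0 : (0:ℝ) ≤ s := hs.1
    have hin : 0 ≤ ∫ r in (0:ℝ)..s, μ * (1 + r) ^ (μ - 1) * F r := by
      apply intervalIntegral.integral_nonneg hs0
      intro r hr
      have hr0 : (0:ℝ) ≤ r := hr.1
      have := hnonneg r hr0
      positivity
    have h1 : (0:ℝ) ≤ 1 + s := by linarith
    positivity
  -- ∫₀ᵗ w ≥ (1+t)^{-μ} (e^{2t}-1)/2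
  have hwlow : (1 + t) ^ (-μ) * (Real.exp (2 * t) - 1) / 2 ≤
      ∫ s in (0:ℝ)..t, Real.exp (2 * s) * (1 + s) ^ (-μ) := by
    have hlow : (∫ s in (0:ℝ)..t, Real.exp (2 * s) * (1 + t) ^ (-μ)) =
        (1 + t) ^ (-μ) * (Real.exp (2 * t) - 1) / 2 := by
      rw [intervalIntegral.integral_mul_const, hexpFTC t]
      ring
    rw [← hlow]
    apply intervalIntegral.integral_mono_on ht
    · exact ((Real.continuous_exp.comp (continuous_const.mul continuous_id)).mul
        continuous_const).intervalIntegrable 0 t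
    · exact hwint t ht
    · intro s hs
      have hs0 : (0:ℝ) ≤ s := hs.1
      have hle : (1 + t) ^ (-μ) ≤ (1 + s) ^ (-μ) :=
        Real.rpow_le_rpow_of_nonpos (by linarith) (by linarith [hs.2]) (by linarith)
      exact mul_le_mul_of_nonneg_left hle (Real.exp_pos _).le
  -- combine
  set x := (1 + t) ^ (-μ) with hx_def
  have hx1 : x ≤ 1 := Real.rpow_le_one_of_one_le_of_nonpos (by linarith) (by linarith)
  have hx0 : 0 < x := Real.rpow_pos_of_pos h1t _
  have hkey : Real.exp (2 * t) * (A * x / 2) ≤ Real.exp (2 * t) * F t := by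
    have h1 : A * ((1 + t) ^ (-μ) * (Real.exp (2 * t) - 1) / 2) ≤
        A * ∫ s in (0:ℝ)..t, Real.exp (2 * s) * (1 + s) ^ (-μ) :=
      mul_le_mul_of_nonneg_left hwlow hA
    have hE : (1:ℝ) ≤ Real.exp (2 * t) := by
      rw [show (1:ℝ) = Real.exp 0 by simp]
      exact Real.exp_le_exp.2 (by linarith)
    nlinarith [hF0, hD0, H, hx1, hx0, hA]
  have hmain : A * x / 2 ≤ F t :=
    le_of_mul_le_mul_left hkey (Real.exp_pos _)
  have hxeq : A / (2 * (1 + t) ^ μ) = A * x / 2 := by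
    rw [hx_def, Real.rpow_neg h1t.le]
    have hp : (0:ℝ) < (1 + t) ^ μ := Real.rpow_pos_of_pos h1t _
    field_simp
  rw [hxeq]
  exact hmain
end
end
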